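/- Let U : ℕ → ℝ → ℝ → ℝ be defined by U 0 x y = 1, U 1 x y = 2x, U (2i) x y = 2y·U (2i−1) x y − U (2i−2) x y and U (2i+1) x y = 2x·U (2i) x y − U (2i−1) x y for i ≥ 1. Then for every i ∈ ℕ there exists a polynomial P over ℤ with natural degree i and leading coefficient 4^i such that for all real x, y one has U (2i) x y = (P.map (Int.cast : ℤ → ℝ)).eval (x·y). In particular, U (2i) x y depends only on the product x·y. -/

import Mathlib

/-!
Writing `t = x * y`, induction on `i` shows `U (2i) = P_i(t)` and `U (2i+1) = 2x · Q_i(t)`, where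
`P = evenPoly`, `Q = oddPoly`, `P_{i+1} = 4X Q_i - P_i` and `Q_{i+1} = P_{i+1} - Q_i`: the factor `2y` of the even step meets the
factor `2x` of the odd one, and `4 x y` is `4t`. The term `4X Q_i` dominates, so `P_i` and `Q_i`
both have degree `i` and leading coefficient `4^i`.
-/

open Polynomial

mutual

noncomputable def evenPoly : ℕ → ℤ[X]
  | 0 => 1
  | i + 1 => C 4 * X * oddPoly i - evenPoly i

noncomputable def oddPoly : ℕ → ℤ[X]
  | 0 => 1
  | i + 1 => C 4 * X * oddPoly i - evenPoly i - oddPoly i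

end

theorem oddPoly_succ (i : ℕ) : oddPoly (i + 1) = evenPoly (i + 1) - oddPoly i := by
  rw [oddPoly, evenPoly]

section

variable {R : Type*} [Ring R] {a : R} {p q : R[X]}

theorem natDegree_C_mul_X_mul (ha : a * q.leadingCoeff ≠ 0) :
    (C a * X * q).natDegree = q.natDegree + 1 := by
  have ha' : a ≠ 0 := left_ne_zero_of_mul ha
  rw [natDegree_mul' (by rwa [leadingCoeff_C_mul_X]), natDegree_C_mul_X a ha', add_comm]

theorem leadingCoeff_C_mul_X_mul (ha : a * q.leadingCoeff ≠ 0) :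
    (C a * X * q).leadingCoeff = a * q.leadingCoeff := by
  rw [leadingCoeff_mul' (by rwa [leadingCoeff_C_mul_X]), leadingCoeff_C_mul_X]

theorem natDegree_C_mul_X_mul_sub (ha : a * q.leadingCoeff ≠ 0) (hpq : p.natDegree ≤ q.natDegree) :
    (C a * X * q - p).natDegree = q.natDegree + 1 := by
  rw [natDegree_sub_eq_left_of_natDegree_lt (by rw [natDegree_C_mul_X_mul ha]; omega),
    natDegree_C_mul_X_mul ha]

theorem leadingCoeff_C_mul_X_mul_sub (ha : a * q.leadingCoeff ≠ 0)
    (hpq : p.natDegree ≤ q.natDegree) :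
    (C a * X * q - p).leadingCoeff = a * q.leadingCoeff := by
  rw [leadingCoeff_sub_of_degree_lt, leadingCoeff_C_mul_X_mul ha]
  exact degree_lt_degree (by rw [natDegree_C_mul_X_mul ha]; omega)

end

theorem natDegree_leadingCoeff_evenPoly_oddPoly (i : ℕ) :
    (evenPoly i).natDegree = i ∧ (evenPoly i).leadingCoeff = 4 ^ i ∧
      (oddPoly i).natDegree = i ∧ (oddPoly i).leadingCoeff = 4 ^ i := by
  induction i with
  | zero => simp [evenPoly, oddPoly]
  | succ i ih =>
    obtain ⟨hPdeg, -, hQdeg, hQlc⟩ := ih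
    have hlc : (4 : ℤ) * (oddPoly i).leadingCoeff ≠ 0 := by rw [hQlc]; positivity
    have hle : (evenPoly i).natDegree ≤ (oddPoly i).natDegree := by omega
    have hPdeg' : (evenPoly (i + 1)).natDegree = i + 1 := by
      rw [evenPoly, natDegree_C_mul_X_mul_sub hlc hle, hQdeg]
    have hPlc' : (evenPoly (i + 1)).leadingCoeff = 4 ^ (i + 1) := by
      rw [evenPoly, leadingCoeff_C_mul_X_mul_sub hlc hle, hQlc, pow_succ']
    have hQP : (oddPoly i).natDegree < (evenPoly (i + 1)).natDegree := by omega
    refine ⟨hPdeg', hPlc', ?_, ?_⟩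
    · rw [oddPoly_succ, natDegree_sub_eq_left_of_natDegree_lt hQP, hPdeg']
    · rw [oddPoly_succ, leadingCoeff_sub_of_degree_lt (degree_lt_degree hQP), hPlc']

theorem eval_evenPoly_oddPoly_of_recurrence {R : Type*} [CommRing R] (U : ℕ → R → R → R)
    (h0 : ∀ x y, U 0 x y = 1) (h1 : ∀ x y, U 1 x y = 2 * x)
    (heven : ∀ i x y, U (2 * i + 2) x y = 2 * y * U (2 * i + 1) x y - U (2 * i) x y)
    (hodd : ∀ i x y, U (2 * i + 3) x y = 2 * x * U (2 * i + 2) x y - U (2 * i + 1) x y)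
    (i : ℕ) (x y : R) :
    U (2 * i) x y = ((evenPoly i).map (Int.castRingHom R)).eval (x * y) ∧
      U (2 * i + 1) x y = 2 * x * ((oddPoly i).map (Int.castRingHom R)).eval (x * y) := by
  induction i with
  | zero => simp [evenPoly, oddPoly, h0, h1]
  | succ i ih =>
    obtain ⟨hP, hQ⟩ := ih
    have hP' : U (2 * (i + 1)) x y = ((evenPoly (i + 1)).map (Int.castRingHom R)).eval (x * y) := by
      rw [mul_add_one, heven, hP, hQ, evenPoly]
      simp only [map_ofNat, Polynomial.map_sub, Polynomial.map_mul, Polynomial.map_ofNat, map_X,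
        eval_sub, eval_mul, eval_ofNat, eval_X]
      ring
    refine ⟨hP', ?_⟩
    rw [show 2 * (i + 1) + 1 = 2 * i + 3 by ring, hodd, ← mul_add_one, hP', hQ, oddPoly_succ,
      Polynomial.map_sub, eval_sub]
    ring

theorem stmt_8 (U : ℕ → ℝ → ℝ → ℝ)
    (hU0 : ∀ x y : ℝ, U 0 x y = 1)
    (hU1 : ∀ x y : ℝ, U 1 x y = 2 * x)
    (hUeven : ∀ i : ℕ, 1 ≤ i → ∀ x y : ℝ,
      U (2 * i) x y = 2 * y * U (2 * i - 1) x y - U (2 * i - 2) x y)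
    (hUodd : ∀ i : ℕ, 1 ≤ i → ∀ x y : ℝ,
      U (2 * i + 1) x y = 2 * x * U (2 * i) x y - U (2 * i - 1) x y) :
    ∀ i : ℕ, ∃ P : Polynomial ℤ, P.natDegree = i ∧ P.leadingCoeff = 4 ^ i ∧
      ∀ x y : ℝ, U (2 * i) x y = (P.map (Int.castRingHom ℝ)).eval (x * y) := by
  have heven (i : ℕ) (x y : ℝ) :
      U (2 * i + 2) x y = 2 * y * U (2 * i + 1) x y - U (2 * i) x y := by
    simpa [mul_add_one] using hUeven (i + 1) (by omega) x y
  have hodd (i : ℕ) (x y : ℝ) :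
      U (2 * i + 3) x y = 2 * x * U (2 * i + 2) x y - U (2 * i + 1) x y := by
    simpa [mul_add_one] using hUodd (i + 1) (by omega) x y
  intro i
  obtain ⟨hdeg, hlc, -⟩ := natDegree_leadingCoeff_evenPoly_oddPoly i
  exact ⟨evenPoly i, hdeg, hlc, fun x y =>
    (eval_evenPoly_oddPoly_of_recurrence U hU0 hU1 heven hodd i x y).1⟩
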